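/- arXiv:1602.08201 — 4 statements merged into one kernel-verified Lean document; each statement's English description precedes it below -/
import Mathlib

section
/- Under the hypotheses of the previous setting, if (1−c)·Vol(Δ⁻) < ∫_{Δ⁻} (1−θ)² dx, then there exists a simple piecewise linear convex function u on Δ (namely u = max{θ−1,0}) with L(u) < 0. -/
open MeasureTheory

/-! On `{θ > 1}` the function `u = max (θ - 1) 0` is the affine function `θ - 1`, so the Euler
term `x ⬝ ∇u - u` equals `(θ - c) - (θ - 1) = 1 - c` and `(1 - θ) u = -(1 - θ)²`. Everywhere else
`u` attains its minimum `0`, so its derivative and the whole integrand vanish. Hence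
`L(u) = (1 - c) Vol(Δ⁻) - ∫_{Δ⁻} (1 - θ)²`, which is negative by hypothesis. -/

section Euler

variable {E : Type*} [NormedAddCommGroup E] [NormedSpace ℝ E] {θ : E → ℝ}

theorem fderiv_max_sub_one_zero_of_one_lt {φ : E →L[ℝ] ℝ} {c : ℝ} (hθ : ∀ x, θ x = φ x + c)
    {x : E} (hx : 1 < θ x) : fderiv ℝ (fun y => max (θ y - 1) 0) x = φ := by
  have hθc : Continuous θ := by rw [funext hθ]; fun_prop
  have hev : (fun y => max (θ y - 1) 0) =ᶠ[nhds x] fun y => φ y + (c - 1) := by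
    filter_upwards [(isOpen_lt continuous_const hθc).mem_nhds hx] with y hy
    rw [max_eq_left (by linarith [show 1 < θ y from hy]), hθ]
    ring
  rw [hev.fderiv_eq]
  exact (φ.hasFDerivAt.add_const _).fderiv

/-- This includes the kink `θ x = 1`: `fderiv` vanishes at a local minimum whether or not the
function is differentiable there. -/
theorem fderiv_max_sub_one_zero_of_le_one {x : E} (hx : θ x ≤ 1) :
    fderiv ℝ (fun y => max (θ y - 1) 0) x = 0 :=
  IsLocalMin.fderiv_eq_zero <| Filter.Eventually.of_forall fun y => by
    simp [max_eq_right (by linarith : θ x - 1 ≤ 0)]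

theorem integrand_max_sub_one_zero_eq_indicator {φ : E →L[ℝ] ℝ} {c : ℝ}
    (hθ : ∀ x, θ x = φ x + c) (x : E) :
    fderiv ℝ (fun y => max (θ y - 1) 0) x x - max (θ x - 1) 0 + (1 - θ x) * max (θ x - 1) 0
      = {y | 1 < θ y}.indicator (fun y => 1 - c - (1 - θ y) ^ 2) x := by
  rcases lt_or_ge 1 (θ x) with hx | hx
  · rw [fderiv_max_sub_one_zero_of_one_lt hθ hx, Set.indicator_of_mem (s := {y | 1 < θ y}) hx,
      max_eq_left (by linarith), hθ x]
    ring
  · rw [fderiv_max_sub_one_zero_of_le_one hx,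
      Set.indicator_of_notMem (s := {y | 1 < θ y}) hx.not_gt, max_eq_right (by linarith)]
    simp

end Euler

theorem sum_mul_apply_single {ι : Type*} [Fintype ι] [DecidableEq ι]
    (f : (ι → ℝ) →L[ℝ] ℝ) (x : ι → ℝ) : ∑ i, x i * f (Pi.single i 1) = f x := by
  conv_rhs => rw [← Finset.univ_sum_single x]
  simp only [map_sum]
  congr! 1 with i
  rw [← smul_eq_mul, ← map_smul, ← Pi.single_smul', smul_eq_mul, mul_one]

theorem setIntegral_indicator_one_lt {X : Type*} [TopologicalSpace X] [T2Space X]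
    [MeasurableSpace X] [OpensMeasurableSpace X] {μ : Measure X} [IsFiniteMeasureOnCompacts μ]
    {Δ : Set X} (hΔ : IsCompact Δ) {θ : X → ℝ} (hθ : Continuous θ) (c : ℝ) :
    ∫ x in Δ, {y | 1 < θ y}.indicator (fun y => 1 - c - (1 - θ y) ^ 2) x ∂μ
      = (1 - c) * (μ (Δ ∩ {y | 1 < θ y})).toReal
        - ∫ x in Δ ∩ {y | 1 < θ y}, (1 - θ x) ^ 2 ∂μ := by
  have hsub : Δ ∩ {y | 1 < θ y} ⊆ Δ := Set.inter_subset_left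
  rw [setIntegral_indicator (isOpen_lt continuous_const hθ).measurableSet, integral_sub,
    setIntegral_const, smul_eq_mul, mul_comm, measureReal_def]
  · exact integrableOn_const ((measure_mono hsub).trans_lt hΔ.measure_lt_top).ne
  · exact (((continuous_const.sub hθ).pow 2).continuousOn.integrableOn_compact hΔ).mono_set hsub

theorem stmt2_general (n : ℕ) (Δ : Set (Fin n → ℝ)) (hcomp : IsCompact Δ)
    (a : Fin n → ℝ) (c : ℝ)
    (θ : (Fin n → ℝ) → ℝ) (hθ : ∀ x, θ x = ∑ i, a i * x i + c)
    (Δm : Set (Fin n → ℝ)) (hΔm : Δm = {x ∈ Δ | θ x > 1})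
    (hineq : (1 - c) * (volume Δm).toReal < ∫ x in Δm, (1 - θ x) ^ 2) :
    ∃ u : (Fin n → ℝ) → ℝ, (∀ x, u x = max (θ x - 1) 0) ∧
      ∫ x in Δ, (((∑ i, x i * fderiv ℝ u x (Pi.single i 1)) - u x) + (1 - θ x) * u x) < 0 := by
  set φ : (Fin n → ℝ) →L[ℝ] ℝ := ∑ i, a i • ContinuousLinearMap.proj i
  have hθφ : ∀ x, θ x = φ x + c := fun x => by simp [φ, hθ]
  have hθc : Continuous θ := by rw [funext hθφ]; fun_prop
  refine ⟨fun x => max (θ x - 1) 0, fun _ => rfl, ?_⟩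
  simp_rw [sum_mul_apply_single, integrand_max_sub_one_zero_eq_indicator hθφ,
    setIntegral_indicator_one_lt hcomp hθc c]
  subst hΔm
  exact sub_neg.2 hineq

/-- destabilizing simple piecewise linear function when
(1−c)·Vol(Δ⁻) < ∫_{Δ⁻}(1−θ)². -/
theorem stmt2 (n : ℕ) (Δ : Set (Fin n → ℝ)) (hconv : Convex ℝ Δ) (hcomp : IsCompact Δ)
    (h0 : (0 : Fin n → ℝ) ∈ interior Δ)
    (a : Fin n → ℝ) (c : ℝ)
    (θ : (Fin n → ℝ) → ℝ) (hθ : ∀ x, θ x = ∑ i, a i * x i + c)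
    (hnorm : ∫ x in Δ, θ x = 0)
    (Δm : Set (Fin n → ℝ)) (hΔm : Δm = {x ∈ Δ | θ x > 1})
    (hpos : 0 < volume Δm)
    (hineq : (1 - c) * (volume Δm).toReal < ∫ x in Δm, (1 - θ x) ^ 2) :
    ∃ u : (Fin n → ℝ) → ℝ, (∀ x, u x = max (θ x - 1) 0) ∧
      ∫ x in Δ, (((∑ i, x i * fderiv ℝ u x (Pi.single i 1)) - u x) + (1 - θ x) * u x) < 0 :=
  stmt2_general n Δ hcomp a c θ hθ Δm hΔm hineq
end

section
/- Let Δ be the polytope of the previous item (moment polytope of B₂ = ℙ(O ⊕ O(1)) over ℙ²), and let θ(x) = −(70/97)x₃ − 15/97. Then ∫_Δ θ dx = 0 and θ(x) ≤ 1 for every x ∈ Δ; in particular the set {x ∈ Δ : θ(x) > 1} is empty. -/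
/-!
Slicing `Δ` at height `x₃ = c ∈ [-1, 1]` gives the triangle `x₁, x₂ ≥ -1, x₁ + x₂ ≤ 1 - c`
of area `(3 - c)² / 2`, so by Fubini `∫_Δ θ = ∫_{-1}^{1} θ(c) (3 - c)² / 2 dc`, and this
polynomial integral vanishes. The bound holds because `x₃ ≥ -1` on `Δ` gives `θ ≤ 55/97`.
-/

open MeasureTheory Set

theorem setIntegral_comp_fst_eq_integral_mul_measureReal_slice {α β : Type*}
    [MeasurableSpace α] [MeasurableSpace β] {μ : Measure α} {ν : Measure β}
    [SFinite μ] [SFinite ν]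
    (f : α → ℝ) {s : Set (α × β)} (hs : MeasurableSet s)
    (hf : IntegrableOn (fun p => f p.1) s (μ.prod ν)) :
    ∫ p in s, f p.1 ∂μ.prod ν = ∫ a, f a * ν.real (Prod.mk a ⁻¹' s) ∂μ := by
  rw [← integral_indicator hs, integral_prod _ (hf.integrable_indicator hs)]
  congr 1 with a
  have : (fun b => s.indicator (fun p => f p.1) (a, b)) =
      (Prod.mk a ⁻¹' s).indicator fun _ => f a := by
    ext b; by_cases h : (a, b) ∈ s <;> simp [h]
  rw [this, integral_indicator (measurable_prodMk_left hs), setIntegral_const, smul_eq_mul,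
    mul_comm]

theorem setIntegral_comp_eval_eq_integral_mul_volume_slice {n : ℕ} (i : Fin (n + 1))
    (f : ℝ → ℝ) {s : Set (Fin (n + 1) → ℝ)} (hs : MeasurableSet s)
    (hf : IntegrableOn (fun x => f (x i)) s) :
    ∫ x in s, f (x i) = ∫ c, f c * volume.real {y | Fin.insertNth i c y ∈ s} := by
  have he := (volume_preserving_piFinSuccAbove (fun _ : Fin (n + 1) => ℝ) i).symm
  rw [← he.setIntegral_preimage_emb (MeasurableEquiv.measurableEmbedding _)]
  rw [← he.integrableOn_comp_preimage (MeasurableEquiv.measurableEmbedding _)] at hf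
  simp only [MeasurableEquiv.piFinSuccAbove_symm_apply, Fin.insertNthEquiv, Equiv.coe_fn_mk,
    Function.comp_def, Fin.insertNth_apply_same] at hf ⊢
  exact setIntegral_comp_fst_eq_integral_mul_measureReal_slice f (hs.preimage (by fun_prop)) hf

theorem setIntegral_Icc_eq_intervalIntegral {f : ℝ → ℝ} {a b : ℝ} (hab : a ≤ b) :
    ∫ x in Icc a b, f x = ∫ x in a..b, f x := by
  rw [integral_Icc_eq_integral_Ioc, intervalIntegral.integral_of_le hab]

theorem volume_real_triangle {a b s : ℝ} (h : a + b ≤ s) :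
    volume.real {p : ℝ × ℝ | a ≤ p.1 ∧ b ≤ p.2 ∧ p.1 + p.2 ≤ s} = (s - a - b) ^ 2 / 2 := by
  set T := {p : ℝ × ℝ | a ≤ p.1 ∧ b ≤ p.2 ∧ p.1 + p.2 ≤ s}
  have hT : MeasurableSet T := by measurability
  have hT_sub : T ⊆ Icc (a, b) (s - b, s - a) := by
    rintro p ⟨h₁, h₂, h₃⟩
    simp only [mem_Icc, Prod.le_def]
    exact ⟨⟨h₁, h₂⟩, by linarith, by linarith⟩
  have hslice (x : ℝ) :
      volume.real (Prod.mk x ⁻¹' T) = (Icc a (s - b)).indicator (fun x => s - b - x) x := by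
    by_cases hx : a ≤ x
    · have : Prod.mk x ⁻¹' T = Icc b (s - x) := by
        ext y; simp [T, hx, le_sub_iff_add_le']
      rw [this, Real.volume_real_Icc]
      by_cases hx' : x ≤ s - b
      · rw [indicator_of_mem (mem_Icc.2 ⟨hx, hx'⟩), max_eq_left (by linarith)]; ring
      · rw [indicator_of_notMem (fun h => hx' h.2), max_eq_right (by linarith)]
    · have : Prod.mk x ⁻¹' T = ∅ := by
        ext y; simp [T, hx]
      rw [this, measureReal_empty, indicator_of_notMem (fun h => hx h.1)]
  calc volume.real T = ∫ p in T, (1 : ℝ) ∂volume.prod volume := by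
        simp [Measure.volume_eq_prod]
    _ = ∫ x, 1 * volume.real (Prod.mk x ⁻¹' T) :=
        setIntegral_comp_fst_eq_integral_mul_measureReal_slice (fun _ => 1) hT
          (continuous_const.integrableOn_Icc.mono_set hT_sub)
    _ = ∫ x in a..(s - b), (s - b - x) := by
        simp only [one_mul, hslice]
        rw [integral_indicator measurableSet_Icc,
          setIntegral_Icc_eq_intervalIntegral (by linarith)]
    _ = (s - a - b) ^ 2 / 2 := by
        rw [intervalIntegral.integral_comp_sub_left (fun x => x), integral_id]
        ring

theorem volume_real_triangle_fin_two {a b s : ℝ} (h : a + b ≤ s) :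
    volume.real {y : Fin 2 → ℝ | a ≤ y 0 ∧ b ≤ y 1 ∧ y 0 + y 1 ≤ s} = (s - a - b) ^ 2 / 2 := by
  rw [← volume_real_triangle h, ← (volume_preserving_finTwoArrow ℝ).measureReal_preimage
    (by measurability : MeasurableSet _).nullMeasurableSet]
  rfl

def momentPolytope : Set (Fin 3 → ℝ) :=
  {x | -1 ≤ x 0 ∧ -1 ≤ x 1 ∧ -1 ≤ x 2 ∧ x 2 ≤ 1 ∧ x 0 + x 1 + x 2 ≤ 1}

theorem measurableSet_momentPolytope : MeasurableSet momentPolytope := by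
  unfold momentPolytope; measurability

theorem momentPolytope_subset_Icc : momentPolytope ⊆ Icc (fun _ => -1) (fun _ => 3) := by
  rintro x ⟨h₀, h₁, h₂, h₂', h⟩
  refine ⟨fun i => ?_, fun i => ?_⟩ <;> fin_cases i <;> simp <;> linarith

theorem volume_real_slice_momentPolytope (c : ℝ) :
    volume.real {y | Fin.insertNth 2 c y ∈ momentPolytope} =
      (Icc (-1) 1).indicator (fun c => (3 - c) ^ 2 / 2) c := by
  have hy (y : Fin 2 → ℝ) :
      (Fin.insertNth 2 c y : Fin 3 → ℝ) 0 = y 0 ∧ (Fin.insertNth 2 c y : Fin 3 → ℝ) 1 = y 1 :=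
    ⟨rfl, rfl⟩
  by_cases hc : c ∈ Icc (-1) 1
  · have : {y | Fin.insertNth 2 c y ∈ momentPolytope} =
        {y : Fin 2 → ℝ | -1 ≤ y 0 ∧ -1 ≤ y 1 ∧ y 0 + y 1 ≤ 1 - c} := by
      ext y; simp [momentPolytope, hy, hc.1, hc.2, le_sub_iff_add_le]
    rw [this, volume_real_triangle_fin_two (by linarith [hc.2]), indicator_of_mem hc]
    ring
  · have : {y | Fin.insertNth 2 c y ∈ momentPolytope} = ∅ :=
      eq_empty_iff_forall_notMem.2 fun _ ⟨_, _, h₁, h₂, _⟩ => hc ⟨h₁, h₂⟩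
    rw [this, measureReal_empty, indicator_of_notMem hc]

theorem setIntegral_momentPolytope_comp_eval_two {f : ℝ → ℝ} (hf : Continuous f) :
    ∫ x in momentPolytope, f (x 2) = ∫ c in (-1)..1, f c * ((3 - c) ^ 2 / 2) := by
  rw [setIntegral_comp_eval_eq_integral_mul_volume_slice 2 f measurableSet_momentPolytope
    ((hf.comp (continuous_apply 2)).integrableOn_Icc.mono_set momentPolytope_subset_Icc)]
  simp_rw [volume_real_slice_momentPolytope, ← indicator_mul_right]
  rw [integral_indicator measurableSet_Icc, setIntegral_Icc_eq_intervalIntegral (by norm_num)]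

theorem integral_theta_mul_slice_area :
    ∫ c in (-1 : ℝ)..1, (-(70 / 97) * c - 15 / 97) * ((3 - c) ^ 2 / 2) = 0 := by
  have hF (c : ℝ) :
      HasDerivAt (fun c => (-(35 / 2) * c ^ 4 + 135 * c ^ 3 - 270 * c ^ 2 - 135 * c) / 194)
        ((-(70 / 97) * c - 15 / 97) * ((3 - c) ^ 2 / 2)) c :=
    (((((hasDerivAt_pow 4 c).const_mul _).fun_add ((hasDerivAt_pow 3 c).const_mul _)).fun_sub
      ((hasDerivAt_pow 2 c).const_mul _)).fun_sub ((hasDerivAt_id c).const_mul _)).div_const 194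
      |>.congr_deriv (by norm_num; ring)
  rw [intervalIntegral.integral_eq_sub_of_hasDerivAt (fun c _ => hF c)
    ((by fun_prop : Continuous _).intervalIntegrable _ _)]
  norm_num

/-- θ = −(70/97)x₃ − 15/97 on the moment polytope of B₂ has zero mean and is ≤ 1. -/
theorem stmt4 (Δ : Set (Fin 3 → ℝ))
    (hΔ : Δ = {x : Fin 3 → ℝ | -1 ≤ x 0 ∧ -1 ≤ x 1 ∧ -1 ≤ x 2 ∧ x 2 ≤ 1 ∧
      x 0 + x 1 + x 2 ≤ 1})
    (θ : (Fin 3 → ℝ) → ℝ) (hθ : ∀ x, θ x = -(70 / 97) * x 2 - 15 / 97) :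
    (∫ x in Δ, θ x = 0) ∧ (∀ x ∈ Δ, θ x ≤ 1) ∧ {x ∈ Δ | θ x > 1} = ∅ := by
  change Δ = momentPolytope at hΔ
  subst hΔ
  have hle : ∀ x ∈ momentPolytope, θ x ≤ 1 := by
    rintro x ⟨-, -, h₂, -, -⟩
    rw [hθ]
    linarith
  refine ⟨?_, hle, eq_empty_iff_forall_notMem.2 fun x ⟨hx, hθx⟩ => (hle x hx).not_gt hθx⟩
  simp only [hθ]
  rw [setIntegral_momentPolytope_comp_eval_two (f := fun c => -(70 / 97) * c - 15 / 97)
    (by fun_prop)]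
  exact integral_theta_mul_slice_area
end

section
/- Let Δ ⊂ ℝ³ be the convex hull of (0,−1,1), (4,−1,−1), (−1,−1,−1), (−1,−1,1), (−1,4,−1), (−1,0,1), and set θ(x) = −(620/349)x₃ − 240/349. Then the set Δ⁻ = {x ∈ Δ : θ(x) ≥ 1} = {x ∈ Δ : −589/349 − (620/349)x₃ ≥ 0} equals the convex hull of the six points (4,−1,−1), (39/10,−1,−19/20), (−1,−1,−19/20), (−1,39/10,−19/20), (−1,−1,−1), (−1,4,−1), and Vol(Δ⁻) = 7351/12000. -/
/-!
Every vertex of `Δ` lies in one of the planes `x₃ = -1`, `x₃ = 1`, and the two triangles there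
are slices of the simplex `xᵢ ≥ -1, x₁ + x₂ + 2 x₃ ≤ 1` (apex `(-1, -1, 3/2)`). The slices of this
simplex are homothetic triangles whose vertices move affinely with the height, so the part of the
simplex below height `t` is the convex hull of its slices at heights `-1` and `t`. Hence `Δ` is the
part below height `1`, and `Δ⁻`, cut out by `x₃ ≤ -19/20`, the part below height `-19/20`. The slice
at height `z` is a right isosceles triangle with legs `3 - 2z`, so by Fubini
`Vol(Δ⁻) = ∫_{-1}^{-19/20} (3 - 2z)² / 2 dz = (125 - (49/10)³) / 12`.
-/

open MeasureTheory Set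

theorem volume_eq_ofReal_intervalIntegral_of_slices {E : Type*} [MeasureSpace E]
    [SFinite (volume : Measure E)] {s : Set (ℝ × E)} (hs : MeasurableSet s) {a b : ℝ}
    (hab : a ≤ b) (hs_fst : ∀ p ∈ s, p.1 ∈ Icc a b) {f : ℝ → ℝ} (hf : IntegrableOn f (Icc a b))
    (hf_nonneg : ∀ x ∈ Icc a b, 0 ≤ f x)
    (h_slice : ∀ x ∈ Icc a b, volume (Prod.mk x ⁻¹' s) = ENNReal.ofReal (f x)) :
    volume s = ENNReal.ofReal (∫ x in a..b, f x) := by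
  have h_slices : (fun x ↦ volume (Prod.mk x ⁻¹' s)) =
      (Icc a b).indicator fun x ↦ ENNReal.ofReal (f x) := by
    funext x
    by_cases hx : x ∈ Icc a b
    · rw [indicator_of_mem hx, h_slice x hx]
    · have h_empty : Prod.mk x ⁻¹' s = ∅ :=
        eq_empty_of_forall_notMem fun y hy ↦ hx (hs_fst (x, y) hy)
      rw [indicator_of_notMem hx, h_empty, measure_empty]
  rw [Measure.volume_eq_prod, Measure.prod_apply hs, h_slices,
    lintegral_indicator measurableSet_Icc, intervalIntegral.integral_of_le hab,
    ← integral_Icc_eq_integral_Ioc, ofReal_integral_eq_lintegral_ofReal hf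
      ((ae_restrict_iff' measurableSet_Icc).2 (.of_forall hf_nonneg))]

theorem volume_triangle {a b c : ℝ} (h : a + b ≤ c) :
    volume {p : ℝ × ℝ | a ≤ p.1 ∧ b ≤ p.2 ∧ p.1 + p.2 ≤ c} =
      ENNReal.ofReal ((c - a - b) ^ 2 / 2) := by
  have hs : MeasurableSet {p : ℝ × ℝ | a ≤ p.1 ∧ b ≤ p.2 ∧ p.1 + p.2 ≤ c} := by
    measurability
  have h_slice (x : ℝ) (hx : a ≤ x) :
      Prod.mk x ⁻¹' {p : ℝ × ℝ | a ≤ p.1 ∧ b ≤ p.2 ∧ p.1 + p.2 ≤ c} = Icc b (c - x) := by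
    ext y
    simp only [mem_preimage, mem_Icc]
    grind
  rw [volume_eq_ofReal_intervalIntegral_of_slices (a := a) (b := c - b) (f := fun x ↦ c - b - x)
    hs (by linarith) (fun p ⟨h1, h2, h3⟩ ↦ ⟨h1, by linarith⟩)
    (Continuous.integrableOn_Icc (by fun_prop)) (fun x hx ↦ by linarith [hx.2])
    (fun x hx ↦ by rw [h_slice x hx.1, Real.volume_Icc, sub_right_comm]),
    intervalIntegral.integral_comp_sub_left (fun x ↦ x), integral_id]
  congr 1
  ring

theorem volume_triangle_fin_two {a b c : ℝ} (h : a + b ≤ c) :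
    volume {w : Fin 2 → ℝ | a ≤ w 0 ∧ b ≤ w 1 ∧ w 0 + w 1 ≤ c} =
      ENNReal.ofReal ((c - a - b) ^ 2 / 2) := by
  rw [← volume_triangle h, ← (volume_preserving_finTwoArrow ℝ).measure_preimage_equiv]
  rfl

def truncatedSimplex (t : ℝ) : Set (Fin 3 → ℝ) :=
  {x | -1 ≤ x 0 ∧ -1 ≤ x 1 ∧ -1 ≤ x 2 ∧ x 2 ≤ t ∧ x 0 + x 1 + 2 * x 2 ≤ 1}

theorem volume_truncatedSimplex {t : ℝ} (ht₀ : -1 ≤ t) (ht₁ : t ≤ 3 / 2) :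
    volume (truncatedSimplex t) = ENNReal.ofReal ((125 - (3 - 2 * t) ^ 3) / 12) := by
  let s : Set (ℝ × (Fin 2 → ℝ)) :=
    {p | -1 ≤ p.2 0 ∧ -1 ≤ p.2 1 ∧ -1 ≤ p.1 ∧ p.1 ≤ t ∧ p.2 0 + p.2 1 + 2 * p.1 ≤ 1}
  have hs : MeasurableSet s := by
    measurability
  have h_preimage : truncatedSimplex t = MeasurableEquiv.piFinSuccAbove (fun _ ↦ ℝ) 2 ⁻¹' s :=
    rfl
  have h_slice (z : ℝ) (hz : z ∈ Icc (-1) t) : Prod.mk z ⁻¹' s =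
      {w : Fin 2 → ℝ | -1 ≤ w 0 ∧ -1 ≤ w 1 ∧ w 0 + w 1 ≤ 1 - 2 * z} := by
    ext w
    simp only [mem_preimage]
    grind
  rw [h_preimage, (volume_preserving_piFinSuccAbove (fun _ ↦ ℝ) 2).measure_preimage_equiv,
    volume_eq_ofReal_intervalIntegral_of_slices (f := fun z ↦ (3 - 2 * z) ^ 2 / 2) hs ht₀
      (fun p hp ↦ ⟨hp.2.2.1, hp.2.2.2.1⟩) (Continuous.integrableOn_Icc (by fun_prop))
      (fun z _ ↦ by positivity)
      (fun z hz ↦ by rw [h_slice z hz, volume_triangle_fin_two (by linarith [hz.2])]; ring_nf),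
    intervalIntegral.integral_div,
    intervalIntegral.integral_comp_sub_mul (fun z ↦ z ^ 2) two_ne_zero, integral_pow, smul_eq_mul]
  congr 1
  ring

theorem convex_truncatedSimplex (t : ℝ) : Convex ℝ (truncatedSimplex t) := by
  rintro x ⟨hx₀, hx₁, hx₂, hx₃, hx₄⟩ y ⟨hy₀, hy₁, hy₂, hy₃, hy₄⟩ a b ha hb hab
  refine ⟨?_, ?_, ?_, ?_, ?_⟩ <;> simp only [Pi.add_apply, Pi.smul_apply, smul_eq_mul]
  · linear_combination a * hx₀ + b * hy₀ + hab
  · linear_combination a * hx₁ + b * hy₁ + hab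
  · linear_combination a * hx₂ + b * hy₂ + hab
  · linear_combination a * hx₃ + b * hy₃ + t * hab
  · linear_combination a * hx₄ + b * hy₄ + hab

def sliceVertex (z : ℝ) : Fin 3 → Fin 3 → ℝ :=
  ![![2 - 2 * z, -1, z], ![-1, 2 - 2 * z, z], ![-1, -1, z]]

theorem sliceVertex_mem_truncatedSimplex {z t : ℝ} (hz₀ : -1 ≤ z) (hz₁ : z ≤ 3 / 2) (hz : z ≤ t)
    (i : Fin 3) : sliceVertex z i ∈ truncatedSimplex t := by
  fin_cases i <;> refine ⟨?_, ?_, ?_, ?_, ?_⟩ <;>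
    simp only [sliceVertex, Matrix.cons_val, Fin.zero_eta, Fin.mk_one, Fin.reduceFinMk] <;>
    linarith

theorem sliceVertex_mem_segment {z t : ℝ} (hz₀ : -1 ≤ z) (hz : z ≤ t) (ht : -1 < t) (i : Fin 3) :
    sliceVertex z i ∈ segment ℝ (sliceVertex (-1) i) (sliceVertex t i) := by
  have ht' : t + 1 ≠ 0 := by linarith
  refine ⟨(t - z) / (t + 1), (z + 1) / (t + 1), div_nonneg (by linarith) (by linarith),
    div_nonneg (by linarith) (by linarith), by field_simp; ring, ?_⟩
  ext j
  fin_cases i <;> fin_cases j <;>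
    simp only [sliceVertex, Pi.add_apply, Pi.smul_apply, smul_eq_mul, Matrix.cons_val,
      Fin.zero_eta, Fin.mk_one, Fin.reduceFinMk] <;>
    field_simp <;> ring

theorem mem_convexHull_range_sliceVertex {x : Fin 3 → ℝ} {t : ℝ} (hx : x ∈ truncatedSimplex t)
    (ht : t < 3 / 2) : x ∈ convexHull ℝ (range (sliceVertex (x 2))) := by
  obtain ⟨h0, h1, h2, h3, h4⟩ := hx
  have hd : 0 < 3 - 2 * x 2 := by linarith
  -- the barycentric coordinates of `x` in its slice
  let w : Fin 3 → ℝ := ![(x 0 + 1) / (3 - 2 * x 2), (x 1 + 1) / (3 - 2 * x 2),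
    (1 - x 0 - x 1 - 2 * x 2) / (3 - 2 * x 2)]
  have hw_nonneg (i : Fin 3) : 0 ≤ w i := by
    fin_cases i <;> exact div_nonneg (by linarith) hd.le
  have hw_sum : ∑ i, w i = 1 := by
    simp only [Fin.sum_univ_three, w, Matrix.cons_val]
    field_simp
    ring
  have hx : ∑ i, w i • sliceVertex (x 2) i = x := by
    ext j
    fin_cases j <;>
      simp only [Fin.sum_univ_three, Finset.sum_apply, sliceVertex, w, Pi.smul_apply, smul_eq_mul,
        Matrix.cons_val, Fin.zero_eta, Fin.mk_one, Fin.reduceFinMk] <;>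
      field_simp <;> ring
  have hmem := (convex_convexHull ℝ (range (sliceVertex (x 2)))).sum_mem (fun i _ ↦ hw_nonneg i)
    hw_sum fun i _ ↦ subset_convexHull ℝ _ (mem_range_self i)
  rwa [hx] at hmem

theorem truncatedSimplex_eq_convexHull {t : ℝ} (ht₀ : -1 < t) (ht₁ : t < 3 / 2) :
    truncatedSimplex t = convexHull ℝ (range (sliceVertex (-1)) ∪ range (sliceVertex t)) := by
  apply Subset.antisymm
  · intro x hx
    refine convexHull_min ?_ (convex_convexHull ℝ _) (mem_convexHull_range_sliceVertex hx ht₁)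
    rintro _ ⟨i, rfl⟩
    exact segment_subset_convexHull (mem_union_left _ (mem_range_self i))
      (mem_union_right _ (mem_range_self i)) (sliceVertex_mem_segment hx.2.2.1 hx.2.2.2.1 ht₀ i)
  · refine convexHull_min (union_subset ?_ ?_) (convex_truncatedSimplex t) <;>
      rintro _ ⟨i, rfl⟩ <;>
      exact sliceVertex_mem_truncatedSimplex (by linarith) (by linarith) (by linarith) i

theorem range_sliceVertex_union (s t : ℝ) : range (sliceVertex s) ∪ range (sliceVertex t) =
    {![2 - 2 * s, -1, s], ![-1, 2 - 2 * s, s], ![-1, -1, s], ![2 - 2 * t, -1, t],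
      ![-1, 2 - 2 * t, t], ![-1, -1, t]} := by
  simp only [sliceVertex, Matrix.range_cons, Matrix.range_empty, union_empty, singleton_union,
    insert_union]

/-- description of Δ⁻ for B₁ and its volume. -/
theorem stmt6 (Δ : Set (Fin 3 → ℝ))
    (hΔ : Δ = convexHull ℝ ({![0, -1, 1], ![4, -1, -1], ![-1, -1, -1],
      ![-1, -1, 1], ![-1, 4, -1], ![-1, 0, 1]} : Set (Fin 3 → ℝ)))
    (θ : (Fin 3 → ℝ) → ℝ) (hθ : ∀ x, θ x = -(620 / 349) * x 2 - 240 / 349)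
    (Δm : Set (Fin 3 → ℝ)) (hΔm : Δm = {x ∈ Δ | 1 ≤ θ x}) :
    Δm = {x ∈ Δ | 0 ≤ -589 / 349 - (620 / 349) * x 2} ∧
    Δm = convexHull ℝ ({![4, -1, -1], ![39 / 10, -1, -19 / 20], ![-1, -1, -19 / 20],
      ![-1, 39 / 10, -19 / 20], ![-1, -1, -1], ![-1, 4, -1]} : Set (Fin 3 → ℝ)) ∧
    (volume Δm).toReal = 7351 / 12000 := by
  have hΔ_eq : Δ = truncatedSimplex 1 := by
    rw [hΔ, truncatedSimplex_eq_convexHull (by norm_num) (by norm_num), range_sliceVertex_union]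
    congr 1
    ext v
    simp only [mem_insert_iff, mem_singleton_iff]
    norm_num
    tauto
  have hΔm_eq : Δm = truncatedSimplex (-19 / 20) := by
    ext x
    simp only [hΔm, hΔ_eq, hθ, truncatedSimplex, mem_ofPred_eq]
    grind
  refine ⟨?_, ?_, ?_⟩
  · rw [hΔm]
    exact Set.ext fun x ↦ and_congr_right fun _ ↦ by rw [hθ]; constructor <;> intro h <;> linarith
  · rw [hΔm_eq, truncatedSimplex_eq_convexHull (by norm_num) (by norm_num),
      range_sliceVertex_union]
    congr 1
    ext v
    simp only [mem_insert_iff, mem_singleton_iff]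
    norm_num
    tauto
  · rw [hΔm_eq, volume_truncatedSimplex (by norm_num) (by norm_num),
      ENNReal.toReal_ofReal (by norm_num)]
    norm_num
end

section
/- Let Δ ⊂ ℝ³ be the moment polytope of the toric Fano threefold E₄ (as in Table 2), with E_Δ(i) = (20/3)i³ + 10i² + (16/3)i + 1 and ∫_Δ x dx = (−7/8, 5/12, 5/24), Σ_{a ∈ Δ∩ℤ³} a = (−4, 2, 1), and Σ_{a ∈ Δ∩ℤ³} (θ(a) − θ̄)·a = (−11134272/1816885, 1079424/363377, 539712/363377). Then there is no real number s such that Σ_{a ∈ Δ∩ℤ³} a + s·Σ_{a ∈ Δ∩ℤ³}(θ(a) − θ̄)·a = (E_Δ(1)/Vol(Δ))·∫_Δ x dx, where Vol(Δ) = 20/3 and E_Δ(1) = 22. -/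
theorem not_exists_add_smul_eq_of_mul_ne {ι R : Type*} [CommRing R] {u v w : ι → R} (i j : ι)
    (h : (w i - u i) * v j ≠ (w j - u j) * v i) : ¬ ∃ s : R, u + s • v = w := by
  rintro ⟨s, hs⟩
  have hi : u i + s * v i = w i := congrFun hs i
  have hj : u j + s * v j = w j := congrFun hs j
  apply h
  rw [← hi, ← hj]
  ring

/-- the over-determined system (1.7) for E₄ has no solution s. -/
theorem stmt12 :
    ¬ ∃ s : ℝ,
      (![(-4 : ℝ), 2, 1] +
        s • ![(-11134272 / 1816885 : ℝ), 1079424 / 363377, 539712 / 363377])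
      = ((22 : ℝ) / (20 / 3)) • ![(-7 / 8 : ℝ), 5 / 12, 5 / 24] :=
  not_exists_add_smul_eq_of_mul_ne 0 1 (by norm_num)
end
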